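/- Multifocused Decomposition Lemma: for every derivation D in LLM of a focused sequent ⊨ Θ : Ψ,[P], there exist a spent context Σ, a derivation D' of ⊨ Θ : Σ,[P], and a natural number k such that: (i) for every multiset Δ of negative formulas and foci, and every derivation of ⊨ Θ : Σ,Δ of size h, there is a derivation of ⊨ Θ : Ψ,Δ of size h + k (i.e. an open derivation from ⊨ Θ : Σ,Δ to ⊨ Θ : Ψ,Δ, uniform in Δ, consisting of k rule instances); and (ii) size(D') + k equals the size of D. -/
import Mathlib


mutual
inductive PForm (α : Type) : Type
  | atom  : α → PForm α
  | one   : PForm α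
  | tens  : PForm α → PForm α → PForm α
  | zero  : PForm α
  | plus  : PForm α → PForm α → PForm α
  | bang  : NForm α → PForm α
  | up    : NForm α → PForm α

inductive NForm (α : Type) : Type
  | natom : α → NForm α
  | bot   : NForm α
  | parr  : NForm α → NForm α → NForm α
  | top   : NForm α
  | wth   : NForm α → NForm α → NForm α
  | quest : PForm α → NForm α
  | down  : PForm α → NForm α
end

mutual
def PForm.dual {α : Type} : PForm α → NForm α
  | .atom a   => .natom a
  | .one      => .bot
  | .tens P Q => .parr P.dual Q.dual
  | .zero     => .top
  | .plus P Q => .wth P.dual Q.dual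
  | .bang N   => .quest N.dual
  | .up N     => .down N.dual

def NForm.dual {α : Type} : NForm α → PForm α
  | .natom a  => .atom a
  | .bot      => .one
  | .parr N M => .tens N.dual M.dual
  | .top      => .zero
  | .wth N M  => .plus N.dual M.dual
  | .quest P  => .bang P.dual
  | .down P   => .up P.dual
end

/-- Items of a focused context: negative formulas or foci `[P]`. -/
inductive FItem (α : Type) : Type
  | neg : NForm α → FItem α
  | foc : PForm α → FItem α

/-- Sequents of LLM: inversion sequents `⊢ Θ : Γ` and focusing sequents `⊨ Θ : Ψ`. -/
inductive LLMSeq (α : Type) : Type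
  | inv : Multiset (PForm α) → Multiset (NForm α) → LLMSeq α
  | foc : Multiset (PForm α) → Multiset (FItem α) → LLMSeq α

/-- A multiset of negatives seen as a focused context. -/
def negCtx {α : Type} (Γ : Multiset (NForm α)) : Multiset (FItem α) :=
  Γ.map FItem.neg

/-- A multiset of positives seen as a focused context entirely made of foci. -/
def focCtx {α : Type} (Θ : Multiset (PForm α)) : Multiset (FItem α) :=
  Θ.map FItem.foc

/-- Sized derivability in LLM: `LLMS s n` means the sequent `s` has a derivation
consisting of exactly `n` rule instances. -/
inductive LLMS {α : Type} : LLMSeq α → ℕ → Prop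
  | ax (Θ : Multiset (PForm α)) (a : α) :
      LLMS (.foc Θ {FItem.neg (.natom a), FItem.foc (.atom a)}) 1
  | one (Θ : Multiset (PForm α)) :
      LLMS (.foc Θ {FItem.foc .one}) 1
  | tens {Θ : Multiset (PForm α)} {Ψ Ξ : Multiset (FItem α)} {P Q : PForm α} {m n : ℕ} :
      LLMS (.foc Θ (FItem.foc P ::ₘ Ψ)) m → LLMS (.foc Θ (FItem.foc Q ::ₘ Ξ)) n →
      LLMS (.foc Θ (FItem.foc (P.tens Q) ::ₘ (Ψ + Ξ))) (m + n + 1)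
  | plusL {Θ : Multiset (PForm α)} {Ψ : Multiset (FItem α)} {P : PForm α} (Q : PForm α)
      {m : ℕ} :
      LLMS (.foc Θ (FItem.foc P ::ₘ Ψ)) m → LLMS (.foc Θ (FItem.foc (P.plus Q) ::ₘ Ψ)) (m + 1)
  | plusR {Θ : Multiset (PForm α)} {Ψ : Multiset (FItem α)} {Q : PForm α} (P : PForm α)
      {m : ℕ} :
      LLMS (.foc Θ (FItem.foc Q ::ₘ Ψ)) m → LLMS (.foc Θ (FItem.foc (P.plus Q) ::ₘ Ψ)) (m + 1)
  | bang {Θ : Multiset (PForm α)} {N : NForm α} {m : ℕ} :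
      LLMS (.inv Θ {N}) m → LLMS (.foc Θ {FItem.foc (.bang N)}) (m + 1)
  | up {Θ : Multiset (PForm α)} {Γ : Multiset (NForm α)} (Δ : Multiset (NForm α))
      (hΔ : Δ ≠ 0) {m : ℕ} :
      LLMS (.inv Θ (Γ + Δ)) m →
      LLMS (.foc Θ (negCtx Γ + Δ.map (fun N => FItem.foc (.up N)))) (m + 1)
  | down {Θ : Multiset (PForm α)} {Γ : Multiset (NForm α)} (Θn Θ' : Multiset (PForm α))
      (hcopy : ∀ P ∈ Θn, P ∈ Θ) (hne : Θn ≠ 0 ∨ Θ' ≠ 0) {m : ℕ} :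
      LLMS (.foc Θ (focCtx Θn + negCtx Γ + focCtx Θ')) m →
      LLMS (.inv Θ (Γ + Θ'.map NForm.down)) (m + 1)
  | bot {Θ : Multiset (PForm α)} {Γ : Multiset (NForm α)} {m : ℕ} :
      LLMS (.inv Θ Γ) m → LLMS (.inv Θ (NForm.bot ::ₘ Γ)) (m + 1)
  | parr {Θ : Multiset (PForm α)} {Γ : Multiset (NForm α)} {N M : NForm α} {m : ℕ} :
      LLMS (.inv Θ (N ::ₘ M ::ₘ Γ)) m → LLMS (.inv Θ (NForm.parr N M ::ₘ Γ)) (m + 1)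
  | top (Θ : Multiset (PForm α)) (Γ : Multiset (NForm α)) :
      LLMS (.inv Θ (NForm.top ::ₘ Γ)) 1
  | wth {Θ : Multiset (PForm α)} {Γ : Multiset (NForm α)} {N M : NForm α} {m n : ℕ} :
      LLMS (.inv Θ (N ::ₘ Γ)) m → LLMS (.inv Θ (M ::ₘ Γ)) n →
      LLMS (.inv Θ (NForm.wth N M ::ₘ Γ)) (m + n + 1)
  | quest {Θ : Multiset (PForm α)} {Γ : Multiset (NForm α)} {P : PForm α} {m : ℕ} :
      LLMS (.inv (P ::ₘ Θ) Γ) m → LLMS (.inv Θ (NForm.quest P ::ₘ Γ)) (m + 1)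

/-- A focused context is spent when every focus it contains is of the form `[⇑N]`. -/
def Spent {α : Type} (S : Multiset (FItem α)) : Prop :=
  ∀ P : PForm α, FItem.foc P ∈ S → ∃ N : NForm α, P = PForm.up N

lemma LLMS.ctx_eq {α : Type} {Θ : Multiset (PForm α)} {A B : Multiset (FItem α)} {n : ℕ}
    (h : LLMS (.foc Θ A) n) (e : A = B) : LLMS (.foc Θ B) n := e ▸ h

lemma LLMS.size_eq {α : Type} {s : LLMSeq α} {a b : ℕ}
    (h : LLMS s a) (e : a = b) : LLMS s b := e ▸ h

lemma spent_of_le {α : Type} {S T : Multiset (FItem α)} (hle : S ≤ T) (hT : Spent T) :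
    Spent S := fun P hP => hT P (Multiset.mem_of_le hle hP)

lemma spent_add {α : Type} {S T : Multiset (FItem α)} (hS : Spent S) (hT : Spent T) :
    Spent (S + T) := by
  intro P hP
  rcases Multiset.mem_add.mp hP with h | h
  · exact hS P h
  · exact hT P h

lemma spent_zero {α : Type} : Spent (0 : Multiset (FItem α)) := by
  intro P hP; simp at hP

private lemma mfd_aux {α : Type} {s : LLMSeq α} {n : ℕ} (hD : LLMS s n) :
    ∀ (Θ : Multiset (PForm α)) (Ψ : Multiset (FItem α)) (P : PForm α),
      s = .foc Θ (FItem.foc P ::ₘ Ψ) →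
      ∃ (S : Multiset (FItem α)) (m k : ℕ),
        Spent S ∧
        LLMS (.foc Θ (FItem.foc P ::ₘ S)) m ∧
        (∀ (Δ : Multiset (FItem α)) (h : ℕ),
          LLMS (.foc Θ (S + Δ)) h → LLMS (.foc Θ (Ψ + Δ)) (h + k)) ∧
        m + k = n := by
  classical
  induction hD with
  | ax Θ a =>
      intro Θ' Ψ₀ P₀ heq
      injection heq with h1 h2
      subst h1
      rw [show ({FItem.neg (.natom a), FItem.foc (.atom a)} : Multiset (FItem α))
            = FItem.neg (.natom a) ::ₘ {FItem.foc (.atom a)} from rfl,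
          Multiset.cons_eq_cons] at h2
      rcases h2 with ⟨hab, _⟩ | ⟨hne, cs, hc1, hc2⟩
      · exact absurd hab (by simp)
      · have hc1' : FItem.foc (PForm.atom a) ::ₘ (0 : Multiset (FItem α))
            = FItem.foc P₀ ::ₘ cs := hc1
        rw [Multiset.cons_eq_cons] at hc1'
        rcases hc1' with ⟨hp, h0⟩ | ⟨_, ds, hd, _⟩
        · injection hp with hp'
          subst hp'
          subst hc2
          subst h0
          refine ⟨{FItem.neg (.natom a)}, 1, 0, ?_, ?_, ?_, rfl⟩
          · intro Q hQ; simp at hQ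
          · exact (LLMS.ax Θ a).ctx_eq (Multiset.cons_swap _ _ _)
          · intro Δ h hh; simpa using hh
        · exact absurd hd.symm (Multiset.cons_ne_zero)
  | one Θ =>
      intro Θ' Ψ₀ P₀ heq
      injection heq with h1 h2
      subst h1
      have h2' : FItem.foc PForm.one ::ₘ (0 : Multiset (FItem α))
          = FItem.foc P₀ ::ₘ Ψ₀ := h2
      rw [Multiset.cons_eq_cons] at h2'
      rcases h2' with ⟨hp, h0⟩ | ⟨_, ds, hd, _⟩
      · injection hp with hp'
        subst hp'
        subst h0
        refine ⟨0, 1, 0, spent_zero, LLMS.one Θ, ?_, rfl⟩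
        intro Δ h hh; simpa using hh
      · exact absurd hd.symm (Multiset.cons_ne_zero)
  | tens hP hQ ihP ihQ =>
      rename_i Θ Ψ Ξ P Q m n
      intro Θ' Ψ₀ P₀ heq
      injection heq with h1 h2
      subst h1
      rw [Multiset.cons_eq_cons] at h2
      rcases h2 with ⟨hp, hctx⟩ | ⟨hne, cs, hc1, hc2⟩
      · injection hp with hp'
        subst hp'
        subst hctx
        obtain ⟨S₁, m₁, k₁, sp₁, D₁, T₁, hk₁⟩ := ihP Θ Ψ P rfl
        obtain ⟨S₂, m₂, k₂, sp₂, D₂, T₂, hk₂⟩ := ihQ Θ Ξ Q rfl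
        refine ⟨S₁ + S₂, m₁ + m₂ + 1, k₁ + k₂, spent_add sp₁ sp₂,
          LLMS.tens D₁ D₂, ?_, by omega⟩
        intro Δ h hh
        have u := T₁ (S₂ + Δ) h (hh.ctx_eq (by abel))
        have v := T₂ (Ψ + Δ) (h + k₁) (u.ctx_eq (by abel))
        exact (v.ctx_eq (by abel)).size_eq (by omega)
      · have hmem : FItem.foc P₀ ∈ Ψ + Ξ := by rw [hc1]; exact Multiset.mem_cons_self _ _
        rcases Multiset.mem_add.mp hmem with hL | hR
        · obtain ⟨Ψ', rfl⟩ := Multiset.exists_cons_of_mem hL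
          have hcs : Ψ' + Ξ = cs := by
            have : FItem.foc P₀ ::ₘ (Ψ' + Ξ) = FItem.foc P₀ ::ₘ cs := by
              rw [← Multiset.cons_add]; exact hc1
            exact (Multiset.cons_inj_right _).mp this
          subst hc2
          obtain ⟨S₁, m₁, k₁, sp₁, D₁, T₁, hk₁⟩ :=
            ihP Θ (FItem.foc P ::ₘ Ψ') P₀ (by rw [Multiset.cons_swap])
          refine ⟨S₁, m₁, k₁ + n + 1, sp₁, D₁, ?_, by omega⟩
          intro Δ h hh
          have u := (T₁ Δ h hh).ctx_eq (Multiset.cons_add _ _ _)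
          have v := LLMS.tens u hQ
          refine v.ctx_eq ?_ |>.size_eq (by omega)
          rw [Multiset.cons_add, ← hcs]
          congr 1
          rw [add_right_comm]
        · obtain ⟨Ξ', rfl⟩ := Multiset.exists_cons_of_mem hR
          have hcs : Ψ + Ξ' = cs := by
            rw [Multiset.add_cons] at hc1
            exact (Multiset.cons_inj_right _).mp hc1
          subst hc2
          obtain ⟨S₂, m₂, k₂, sp₂, D₂, T₂, hk₂⟩ :=
            ihQ Θ (FItem.foc Q ::ₘ Ξ') P₀ (by rw [Multiset.cons_swap])
          refine ⟨S₂, m₂, k₂ + m + 1, sp₂, D₂, ?_, by omega⟩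
          intro Δ h hh
          have u := (T₂ Δ h hh).ctx_eq (Multiset.cons_add _ _ _)
          have v := LLMS.tens hP u
          refine v.ctx_eq ?_ |>.size_eq (by omega)
          rw [Multiset.cons_add, ← hcs]
          congr 1
          rw [add_assoc]
  | plusL Q hp ih =>
      rename_i Θ Ψ P m
      intro Θ' Ψ₀ P₀ heq
      injection heq with h1 h2
      subst h1
      rw [Multiset.cons_eq_cons] at h2
      rcases h2 with ⟨hp, hctx⟩ | ⟨hne, cs, hc1, hc2⟩
      · injection hp with hp'
        subst hp'
        subst hctx
        obtain ⟨S₁, m₁, k₁, sp₁, D₁, T₁, hk₁⟩ := ih Θ Ψ P rfl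
        exact ⟨S₁, m₁ + 1, k₁, sp₁, LLMS.plusL Q D₁, T₁, by omega⟩
      · subst hc1
        subst hc2
        obtain ⟨S₁, m₁, k₁, sp₁, D₁, T₁, hk₁⟩ :=
          ih Θ (FItem.foc P ::ₘ cs) P₀ (by rw [Multiset.cons_swap])
        refine ⟨S₁, m₁, k₁ + 1, sp₁, D₁, ?_, by omega⟩
        intro Δ h hh
        have u := (T₁ Δ h hh).ctx_eq (Multiset.cons_add _ _ _)
        exact (LLMS.plusL Q u).ctx_eq (Multiset.cons_add _ _ _).symm |>.size_eq (by omega)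
  | plusR P ihp ih =>
      rename_i Θ Ψ Q m
      intro Θ' Ψ₀ P₀ heq
      injection heq with h1 h2
      subst h1
      rw [Multiset.cons_eq_cons] at h2
      rcases h2 with ⟨hp, hctx⟩ | ⟨hne, cs, hc1, hc2⟩
      · injection hp with hp'
        subst hp'
        subst hctx
        obtain ⟨S₁, m₁, k₁, sp₁, D₁, T₁, hk₁⟩ := ih Θ Ψ Q rfl
        exact ⟨S₁, m₁ + 1, k₁, sp₁, LLMS.plusR P D₁, T₁, by omega⟩
      · subst hc1
        subst hc2
        obtain ⟨S₁, m₁, k₁, sp₁, D₁, T₁, hk₁⟩ :=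
          ih Θ (FItem.foc Q ::ₘ cs) P₀ (by rw [Multiset.cons_swap])
        refine ⟨S₁, m₁, k₁ + 1, sp₁, D₁, ?_, by omega⟩
        intro Δ h hh
        have u := (T₁ Δ h hh).ctx_eq (Multiset.cons_add _ _ _)
        exact (LLMS.plusR P u).ctx_eq (Multiset.cons_add _ _ _).symm |>.size_eq (by omega)
  | bang hN ih =>
      rename_i Θ N m
      intro Θ' Ψ₀ P₀ heq
      injection heq with h1 h2
      subst h1
      have h2' : FItem.foc (PForm.bang N) ::ₘ (0 : Multiset (FItem α))
          = FItem.foc P₀ ::ₘ Ψ₀ := h2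
      rw [Multiset.cons_eq_cons] at h2'
      rcases h2' with ⟨hp, h0⟩ | ⟨_, ds, hd, _⟩
      · injection hp with hp'
        subst hp'
        subst h0
        refine ⟨0, m + 1, 0, spent_zero, LLMS.bang hN, ?_, rfl⟩
        intro Δ h hh; simpa using hh
      · exact absurd hd.symm (Multiset.cons_ne_zero)
  | up Δ hΔ hprem ih =>
      rename_i Θ Γ m
      intro Θ' Ψ₀ P₀ heq
      injection heq with h1 h2
      subst h1
      have hspentAll : Spent (negCtx Γ + Δ.map (fun N => FItem.foc (.up N))) := by
        intro R hR
        rcases Multiset.mem_add.mp hR with h | h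
        · exact absurd h (by simp [negCtx])
        · obtain ⟨N', _, hN'⟩ := Multiset.mem_map.mp h
          exact ⟨N', by injection hN'.symm⟩
      refine ⟨Ψ₀, m + 1, 0, ?_, (LLMS.up Δ hΔ hprem).ctx_eq h2, ?_, rfl⟩
      · refine spent_of_le ?_ hspentAll
        rw [h2]
        exact Multiset.le_cons_self _ _
      · intro Δ' h hh; simpa using hh
  | down Θn Θ' hcopy hne hprem ih =>
      intro Θ'' Ψ₀ P₀ heq; exact absurd heq (by simp)
  | bot hprem ih =>
      intro Θ'' Ψ₀ P₀ heq; exact absurd heq (by simp)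
  | parr hprem ih =>
      intro Θ'' Ψ₀ P₀ heq; exact absurd heq (by simp)
  | top Θ Γ =>
      intro Θ'' Ψ₀ P₀ heq; exact absurd heq (by simp)
  | wth h1 h2 ih1 ih2 =>
      intro Θ'' Ψ₀ P₀ heq; exact absurd heq (by simp)
  | quest hprem ih =>
      intro Θ'' Ψ₀ P₀ heq; exact absurd heq (by simp)

/-- Multifocused Decomposition Lemma. -/
theorem multifocused_decomposition {α : Type} (Θ : Multiset (PForm α))
    (Ψ : Multiset (FItem α)) (P : PForm α) (n : ℕ)
    (hD : LLMS (.foc Θ (FItem.foc P ::ₘ Ψ)) n) :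
    ∃ (S : Multiset (FItem α)) (m k : ℕ),
      Spent S ∧
      LLMS (.foc Θ (FItem.foc P ::ₘ S)) m ∧
      (∀ (Δ : Multiset (FItem α)) (h : ℕ),
        LLMS (.foc Θ (S + Δ)) h → LLMS (.foc Θ (Ψ + Δ)) (h + k)) ∧
      m + k = n := by
  exact mfd_aux hD Θ Ψ P rfl
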